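/- Let q be a prime power, B, E finite sets, A : B × E → GF(q), and for e ∈ E define F_e ⊆ B × (GF(q) \ {0}) by (b, α) ∈ F_e iff A_{b,e} = α. Let ℓ ≥ 1 and suppose that for every B' ⊆ B, the columns of A restricted to rows B', after identifying parallel vectors and discarding zero vectors, number at most ℓ·|B'|. Then the shatter function of F = {F_e : e ∈ E} satisfies π_F(m) ≤ (q−1)·ℓ·m + 1 ≤ q·ℓ·m for all m ≥ 1. -/
import Mathlib


open Finset Classical in
/-- If for every `B' ⊆ B` the columns of `A` restricted to rows `B'`, after
discarding zero vectors and identifying parallel ones (i.e. those spanning the same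
line), number at most `ℓ·|B'|`, then the set system `F = {F_e : e ∈ E}` on the
ground set `B × (K \ {0})` has shatter function `π_F(m) ≤ (q−1)·ℓ·m + 1 ≤ q·ℓ·m`. -/
theorem shatter_bound_from_growth_rate {K : Type*} [Field K] [Fintype K]
    {B E : Type*} [Fintype B] [Fintype E]
    (A : B → E → K) (ℓ : ℕ) (hℓ : 1 ≤ ℓ)
    (hgrowth : ∀ B' : Finset B,
      ((((Finset.univ : Finset E)).image
          (fun e => Submodule.span K
            ({fun b : {x : B // x ∈ B'} => A b.1 e} : Set ({x : B // x ∈ B'} → K)))).filter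
        (fun p => p ≠ ⊥)).card ≤ ℓ * B'.card) :
    ∀ m : ℕ, 1 ≤ m → ∀ W : Finset (B × K), (∀ p ∈ W, p.2 ≠ 0) → W.card = m →
      (((Finset.univ : Finset E)).image
          (fun e => ((Finset.univ : Finset (B × K)).filter
            (fun p => p.2 ≠ 0 ∧ A p.1 e = p.2)) ∩ W)).card
        ≤ (Fintype.card K - 1) * ℓ * m + 1 ∧
      (Fintype.card K - 1) * ℓ * m + 1 ≤ Fintype.card K * ℓ * m := by
  intro m hm W hW hWcard
  have hq : 2 ≤ Fintype.card K := Fintype.one_lt_card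
  set B' : Finset B := W.image Prod.fst with hB'
  have hB'card : B'.card ≤ m := hWcard ▸ Finset.card_image_le
  set col : E → ({x : B // x ∈ B'} → K) := fun e b => A b.1 e with hcol
  set S : Finset ({x : B // x ∈ B'} → K) := Finset.univ.image col with hS
  set tr : E → Finset (B × K) := fun e => ((Finset.univ : Finset (B × K)).filter
      (fun p => p.2 ≠ 0 ∧ A p.1 e = p.2)) ∩ W with htr
  set trc : ({x : B // x ∈ B'} → K) → Finset (B × K) :=
      fun v => W.filter (fun p => ∀ h : p.1 ∈ B', v ⟨p.1, h⟩ = p.2) with htrc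
  have hmemB' : ∀ p ∈ W, p.1 ∈ B' := fun p hp => Finset.mem_image_of_mem _ hp
  have htreq : ∀ e, tr e = trc (col e) := by
    intro e
    ext p
    simp only [htr, htrc, Finset.mem_inter, Finset.mem_filter, Finset.mem_univ, true_and]
    constructor
    · rintro ⟨⟨h0, hA⟩, hpW⟩
      exact ⟨hpW, fun h => hA⟩
    · rintro ⟨hpW, hA⟩
      exact ⟨⟨hW p hpW, hA (hmemB' p hpW)⟩, hpW⟩
  -- key inclusion
  have key : (Finset.univ.image tr) ⊆
      insert ∅ ((S.filter (fun v => v ≠ 0)).image trc) := by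
    intro T hT
    obtain ⟨e, -, rfl⟩ := Finset.mem_image.mp hT
    rw [htreq e]
    by_cases h0 : col e = 0
    · rw [h0]
      apply Finset.mem_insert.mpr
      left
      ext p
      simp only [htrc, Finset.mem_filter, Finset.notMem_empty, iff_false, not_and]
      intro hpW hA
      exact hW p hpW ((hA (hmemB' p hpW)).symm)
    · apply Finset.mem_insert.mpr
      right
      exact Finset.mem_image_of_mem _ (Finset.mem_filter.mpr
        ⟨Finset.mem_image_of_mem _ (Finset.mem_univ e), h0⟩)
  have hcard1 : (Finset.univ.image tr).card ≤
      (S.filter (fun v => v ≠ 0)).card + 1 := by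
    calc (Finset.univ.image tr).card
        ≤ (insert ∅ ((S.filter (fun v => v ≠ 0)).image trc)).card :=
          Finset.card_le_card key
      _ ≤ ((S.filter (fun v => v ≠ 0)).image trc).card + 1 := Finset.card_insert_le _ _
      _ ≤ (S.filter (fun v => v ≠ 0)).card + 1 := by
          exact Nat.add_le_add_right Finset.card_image_le 1
  -- bound nonzero columns by (q-1) * number of lines
  set sp : ({x : B // x ∈ B'} → K) → Submodule K ({x : B // x ∈ B'} → K) :=
      fun v => Submodule.span K ({v} : Set _) with hsp
  have hfiber : ∀ L ∈ (S.filter (fun v => v ≠ 0)).image sp,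
      ((S.filter (fun v => v ≠ 0)).filter (fun v => sp v = L)).card
        ≤ Fintype.card K - 1 := by
    intro L hL
    obtain ⟨v₀, hv₀, rfl⟩ := Finset.mem_image.mp hL
    have hv₀ne : v₀ ≠ 0 := (Finset.mem_filter.mp hv₀).2
    have hsub : ((S.filter (fun v => v ≠ 0)).filter (fun v => sp v = sp v₀)) ⊆
        ((Finset.univ : Finset K).erase 0).image (fun a => a • v₀) := by
      intro w hw
      obtain ⟨hw1, hw2⟩ := Finset.mem_filter.mp hw
      have hwne : w ≠ 0 := (Finset.mem_filter.mp hw1).2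
      have hwmem : w ∈ sp v₀ := by
        rw [← hw2]; exact Submodule.mem_span_singleton_self w
      obtain ⟨a, ha⟩ := Submodule.mem_span_singleton.mp hwmem
      have hane : a ≠ 0 := by
        rintro rfl; rw [zero_smul] at ha; exact hwne ha.symm
      exact Finset.mem_image.mpr ⟨a, Finset.mem_erase.mpr ⟨hane, Finset.mem_univ _⟩, ha⟩
    calc _ ≤ (((Finset.univ : Finset K).erase 0).image (fun a => a • v₀)).card :=
          Finset.card_le_card hsub
      _ ≤ ((Finset.univ : Finset K).erase 0).card := Finset.card_image_le
      _ = Fintype.card K - 1 := by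
          rw [Finset.card_erase_of_mem (Finset.mem_univ 0), Finset.card_univ]
  have hcard2 : (S.filter (fun v => v ≠ 0)).card ≤
      (Fintype.card K - 1) * ((S.filter (fun v => v ≠ 0)).image sp).card :=
    Finset.card_le_mul_card_image _ _ hfiber
  -- spans of nonzero columns are among the nonbot spans of all columns
  have hsub2 : ((S.filter (fun v => v ≠ 0)).image sp) ⊆
      ((Finset.univ : Finset E).image
          (fun e => Submodule.span K
            ({fun b : {x : B // x ∈ B'} => A b.1 e} : Set ({x : B // x ∈ B'} → K)))).filter
        (fun p => p ≠ ⊥) := by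
    intro L hL
    obtain ⟨v, hv, rfl⟩ := Finset.mem_image.mp hL
    obtain ⟨hvS, hvne⟩ := Finset.mem_filter.mp hv
    obtain ⟨e, -, rfl⟩ := Finset.mem_image.mp hvS
    refine Finset.mem_filter.mpr ⟨Finset.mem_image_of_mem _ (Finset.mem_univ e), ?_⟩
    simpa [hsp, Submodule.span_singleton_eq_bot] using hvne
  have hcard3 : ((S.filter (fun v => v ≠ 0)).image sp).card ≤ ℓ * m := by
    calc _ ≤ _ := Finset.card_le_card hsub2
      _ ≤ ℓ * B'.card := hgrowth B'
      _ ≤ ℓ * m := Nat.mul_le_mul_left ℓ hB'card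
  have hmain : (Finset.univ.image tr).card ≤ (Fintype.card K - 1) * ℓ * m + 1 := by
    calc (Finset.univ.image tr).card ≤ (S.filter (fun v => v ≠ 0)).card + 1 := hcard1
      _ ≤ (Fintype.card K - 1) * ((S.filter (fun v => v ≠ 0)).image sp).card + 1 :=
          Nat.add_le_add_right hcard2 1
      _ ≤ (Fintype.card K - 1) * (ℓ * m) + 1 :=
          Nat.add_le_add_right (Nat.mul_le_mul_left _ hcard3) 1
      _ = (Fintype.card K - 1) * ℓ * m + 1 := by rw [mul_assoc]
  refine ⟨hmain, ?_⟩
  have h1 : 1 ≤ ℓ * m := Nat.one_le_iff_ne_zero.mpr (by positivity)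
  have hqq : Fintype.card K - 1 + 1 = Fintype.card K := by omega
  calc (Fintype.card K - 1) * ℓ * m + 1 ≤ (Fintype.card K - 1) * ℓ * m + ℓ * m := Nat.add_le_add_left h1 _
    _ = ((Fintype.card K - 1) + 1) * ℓ * m := by ring
    _ = Fintype.card K * ℓ * m := by rw [hqq]
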